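/- arXiv:1308.2567 — 2 statements merged into one kernel-verified Lean document; each statement's English description precedes it below -/
import Mathlib

section
/- Let T : ℝ² → ℝ² be continuous, and suppose there exist finitely many closed convex cones σ₁,…,σ_k ⊆ ℝ² with σ₁ ∪ ⋯ ∪ σ_k = ℝ² and 2×2 matrices A₁,…,A_k with integer entries such that T(x) = A_i x for all x ∈ σ_i and all i. Let K = { v ∈ ℝ² : ‖v‖ = 1 and T(v) = λ v for some real λ > 0 } be the set of fixed directions of T. If C is a connected component of K containing more than one point, and v ∈ C lies in the closure of {w ∈ ℝ² : ‖w‖ = 1} \ K, then v is rational: v = t·m for some real t > 0 and some nonzero m ∈ ℤ². -/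
open Filter Topology

/-- The plane `ℝ²` with its Euclidean norm. -/
abbrev E2 := EuclideanSpace ℝ (Fin 2)

/-- Action of an integer `2×2` matrix on `ℝ²`. -/
noncomputable def intAct (M : Matrix (Fin 2) (Fin 2) ℤ) (v : E2) : E2 :=
  WithLp.toLp 2 ((M.map (fun n : ℤ => (n : ℝ))).mulVec v)

/-- The set of fixed directions of `T`: unit vectors sent to positive multiples
of themselves. -/
def fixedDirs (T : E2 → E2) : Set E2 :=
  {v : E2 | ‖v‖ = 1 ∧ ∃ l : ℝ, 0 < l ∧ T v = l • v}

/-!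
Near a non-isolated point `v` of a fixed arc there are infinitely many fixed directions, so by
pigeonhole one cone `σ i` containing `v` contains two of them close to `v`. Then `A i` has three
pairwise independent eigenvectors, hence is a scalar `l • 1`, where `T v = l • v`. Likewise some
cone `σ j ∋ v` contains a non-fixed direction, so `A j ≠ A i`. Now `A j - A i` is a nonzero integer
matrix killing `v`, and the kernel of a nonzero integer row is spanned by an integer vector.
-/

open Module Set

theorem IsPreconnected.mem_closure_diff_singleton {X : Type*} [TopologicalSpace X] [T1Space X]
    {C : Set X} (hC : IsPreconnected C) {v : X} (hv : v ∈ C) (hnt : C.Nontrivial) :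
    v ∈ closure (C \ {v}) := by
  rw [mem_closure_iff]
  intro U hU hvU
  by_contra hdisj
  obtain ⟨w, hwC, hwv⟩ := hnt.exists_ne v
  obtain ⟨x, hxC, hxU, hxv⟩ := hC U {v}ᶜ hU isOpen_compl_singleton
    (fun x _ => by by_cases h : x = v <;> simp_all) ⟨v, hv, hvU⟩ ⟨w, hwC, hwv⟩
  exact hdisj ⟨x, hxU, hxC, hxv⟩

theorem exists_mem_closure_inter_of_iUnion_eq_univ {ι X : Type*} [Finite ι] [TopologicalSpace X]
    {σ : ι → Set X} (hσ : ∀ i, IsClosed (σ i)) (hcover : ⋃ i, σ i = univ) {S : Set X} {v : X}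
    (hv : v ∈ closure S) : ∃ i, v ∈ σ i ∧ v ∈ closure (S ∩ σ i) := by
  rw [← inter_univ S, ← hcover, inter_iUnion, closure_iUnion_of_finite, mem_iUnion] at hv
  obtain ⟨i, hi⟩ := hv
  exact ⟨i, (hσ i).closure_subset (closure_mono inter_subset_right hi), hi⟩

theorem linearIndependent_pair_of_norm_eq_one {V : Type*} [NormedAddCommGroup V] [NormedSpace ℝ V]
    {u w : V} (hu : ‖u‖ = 1) (hw : ‖w‖ = 1) (hne : u ≠ w) (hne' : u ≠ -w) :
    LinearIndependent ℝ ![u, w] := by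
  refine (LinearIndependent.pair_iff' (norm_ne_zero_iff.mp (by simp [hu]))).mpr fun a ha => ?_
  have : |a| = 1 := by simpa [← ha, norm_smul, hu] using hw
  rcases abs_eq (zero_le_one' ℝ) |>.mp this with rfl | rfl
  · exact hne (by simpa using ha)
  · exact hne' (by rw [← ha]; simp)

theorem LinearMap.eq_smul_id_of_three_eigenvectors {K V : Type*} [Field K] [AddCommGroup V]
    [Module K V] (hV : finrank K V = 2) (f : V →ₗ[K] V) {u w z : V} {a b c : K}
    (hu : f u = a • u) (hw : f w = b • w) (hz : f z = c • z)
    (huw : LinearIndependent K ![u, w]) (huz : LinearIndependent K ![u, z])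
    (hwz : LinearIndependent K ![w, z]) : f = a • LinearMap.id := by
  let e := basisOfLinearIndependentOfCardEqFinrank huw (by simp [hV])
  obtain ⟨p, q, rfl⟩ : ∃ p q : K, p • u + q • w = z :=
    ⟨e.repr z 0, e.repr z 1, by simpa [Fin.sum_univ_two, e] using e.sum_repr z⟩
  have hp : p ≠ 0 := by
    rintro rfl
    simpa using LinearIndependent.pair_iff.mp hwz q (-1) (by simp)
  have hq : q ≠ 0 := by
    rintro rfl
    simpa using LinearIndependent.pair_iff.mp huz p (-1) (by simp)
  have hcoeff := LinearIndependent.pair_iff.mp huw (p * (a - c)) (q * (b - c)) (by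
    rw [map_add, map_smul, map_smul, hu, hw] at hz
    linear_combination (norm := module) hz)
  have hac : a = c := by simpa [hp, sub_eq_zero] using hcoeff.1
  have hbc : b = c := by simpa [hq, sub_eq_zero] using hcoeff.2
  refine e.ext fun i => ?_
  fin_cases i
  · simpa [e] using hu
  · simpa [e, hac, hbc] using hw

theorem LinearMap.eq_smul_id_of_mem_closure_eigendirections {V : Type*} [NormedAddCommGroup V]
    [NormedSpace ℝ V] (hV : finrank ℝ V = 2) (f : V →ₗ[ℝ] V) {S : Set V}
    (hS : ∀ w ∈ S, ‖w‖ = 1 ∧ ∃ μ : ℝ, f w = μ • w) {v : V} {l : ℝ} (hv : ‖v‖ = 1)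
    (hfv : f v = l • v) (hacc : v ∈ closure (S \ {v})) : f = l • LinearMap.id := by
  obtain ⟨w, ⟨hwS, hwv⟩, hdw⟩ := Metric.mem_closure_iff.mp hacc 1 one_pos
  obtain ⟨z, ⟨hzS, hzv⟩, hdz⟩ :=
    Metric.mem_closure_iff.mp hacc (dist v w) (dist_pos.mpr (Ne.symm hwv))
  obtain ⟨hw, b, hfw⟩ := hS w hwS
  obtain ⟨hz, c, hfz⟩ := hS z hzS
  have not_antipodal : ∀ x y, ‖y‖ = 1 → dist v x < 1 → dist v y < 1 → x ≠ -y := by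
    rintro x y hy hx hy' rfl
    have : dist (-y) y = 2 := by
      rw [dist_eq_norm, ← neg_add', norm_neg, ← two_smul ℝ, norm_smul, hy]; norm_num
    linarith [dist_triangle_left (-y) y v]
  have hzw : z ≠ w := by rintro rfl; exact lt_irrefl _ hdz
  have hdv : dist v v < 1 := by simp
  have hdz' := hdz.trans hdw
  exact f.eq_smul_id_of_three_eigenvectors hV hfv hfw hfz
    (linearIndependent_pair_of_norm_eq_one hv hw (Ne.symm hwv) (not_antipodal _ _ hw hdv hdw))
    (linearIndependent_pair_of_norm_eq_one hv hz (Ne.symm hzv) (not_antipodal _ _ hz hdv hdz'))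
    (linearIndependent_pair_of_norm_eq_one hw hz hzw.symm (not_antipodal _ _ hz hdw hdz'))

def IsRationalDirection (v : E2) : Prop :=
  ∃ t : ℝ, 0 < t ∧ ∃ m : Fin 2 → ℤ, m ≠ 0 ∧ v = t • (WithLp.toLp 2 (fun j => (m j : ℝ)) : E2)

theorem isRationalDirection_of_dot_eq_zero (r : Fin 2 → ℤ) (hr : r ≠ 0) {v : E2} (hv : v ≠ 0)
    (h : (r 0 : ℝ) * v 0 + r 1 * v 1 = 0) : IsRationalDirection v := by
  -- `m` spans the line orthogonal to `r`, and `s` is the coordinate of `v` along `m`.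
  set m : Fin 2 → ℤ := ![r 1, -r 0]
  have hm : m ≠ 0 := by
    refine fun h0 => hr (funext fun i => ?_)
    have h0 := congrFun h0
    fin_cases i
    · simpa [m] using h0 1
    · simpa [m] using h0 0
  have hden : (r 0 : ℝ) ^ 2 + (r 1 : ℝ) ^ 2 ≠ 0 := by
    intro h0
    obtain ⟨h0, h1⟩ := (add_eq_zero_iff_of_nonneg (sq_nonneg _) (sq_nonneg _)).mp h0
    refine hr (funext fun i => ?_)
    fin_cases i
    · exact_mod_cast pow_eq_zero_iff two_ne_zero |>.mp h0
    · exact_mod_cast pow_eq_zero_iff two_ne_zero |>.mp h1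
  set s := (v 0 * r 1 - v 1 * r 0) / ((r 0 : ℝ) ^ 2 + (r 1 : ℝ) ^ 2)
  have hvs : v = s • (WithLp.toLp 2 (fun j => (m j : ℝ)) : E2) := by
    ext i
    fin_cases i <;>
      simp only [Fin.isValue, Fin.zero_eta, Fin.mk_one, PiLp.smul_apply, smul_eq_mul,
        Matrix.cons_val_zero, Matrix.cons_val_one, Matrix.cons_val_fin_one, Int.cast_neg,
        mul_neg, s, m] <;>
      field_simp
    · linear_combination (r 0 : ℝ) * h
    · linear_combination (r 1 : ℝ) * h
  have hs : s ≠ 0 := by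
    rintro hs
    exact hv (by rw [hvs, hs, zero_smul])
  rcases hs.lt_or_gt with hs | hs
  · refine ⟨-s, neg_pos.mpr hs, -m, neg_ne_zero.mpr hm, ?_⟩
    rw [hvs]; ext i; simp
  · exact ⟨s, hs, m, hm, hvs⟩

theorem intAct_sub (M N : Matrix (Fin 2) (Fin 2) ℤ) (x : E2) :
    intAct (M - N) x = intAct M x - intAct N x := by
  rw [intAct, intAct, intAct, ← WithLp.toLp_sub, ← Matrix.sub_mulVec,
    Matrix.map_sub (fun n : ℤ => (n : ℝ)) Int.cast_sub]

theorem isRationalDirection_of_intAct_eq_zero {M : Matrix (Fin 2) (Fin 2) ℤ} (hM : M ≠ 0)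
    {v : E2} (hv : v ≠ 0) (h : intAct M v = 0) : IsRationalDirection v := by
  obtain ⟨k, hk⟩ := Function.ne_iff.mp hM
  refine isRationalDirection_of_dot_eq_zero (M k) hk hv ?_
  simpa only [intAct, Matrix.mulVec, dotProduct, Fin.sum_univ_two, Matrix.map_apply,
    WithLp.ofLp_zero, Pi.zero_apply] using congrArg (· k) h

theorem endpoints_of_fixed_arcs_are_rational_general
    (T : E2 → E2)
    (k : ℕ) (σ : Fin k → Set E2) (A : Fin k → Matrix (Fin 2) (Fin 2) ℤ)
    (hclosed : ∀ i, IsClosed (σ i))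
    (hcover : (⋃ i, σ i) = Set.univ)
    (hpiece : ∀ i, ∀ x ∈ σ i, T x = intAct (A i) x)
    (C : Set E2) (v : E2) (hv : v ∈ fixedDirs T)
    (hC : C = connectedComponentIn (fixedDirs T) v)
    (hbig : ¬ C.Subsingleton)
    (hcl : v ∈ closure ({w : E2 | ‖w‖ = 1} \ fixedDirs T)) :
    ∃ t : ℝ, 0 < t ∧ ∃ m : Fin 2 → ℤ, m ≠ 0 ∧ v = t • (WithLp.toLp 2 (fun j => (m j : ℝ)) : E2) := by
  have hCfix : C ⊆ fixedDirs T := hC ▸ connectedComponentIn_subset _ _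
  have hacc : v ∈ closure (C \ {v}) := by
    subst hC
    exact isPreconnected_connectedComponentIn.mem_closure_diff_singleton
      (mem_connectedComponentIn hv) (not_subsingleton_iff.mp hbig)
  obtain ⟨hv1, l, hl, hTv⟩ := hv
  obtain ⟨i, hvi, hacc_i⟩ := exists_mem_closure_inter_of_iUnion_eq_univ hclosed hcover hacc
  -- `intAct M` is definitionally `Matrix.toEuclideanLin (M.map Int.cast)`.
  have hAi : Matrix.toEuclideanLin ((A i).map (Int.cast : ℤ → ℝ)) = l • LinearMap.id := by
    refine LinearMap.eq_smul_id_of_mem_closure_eigendirections finrank_euclideanSpace_fin _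
      (S := C ∩ σ i) (fun w hw => ?_) hv1 ((hpiece i v hvi).symm.trans hTv)
      (by rwa [inter_sdiff_right_comm])
    obtain ⟨hw1, μ, -, hTw⟩ := hCfix hw.1
    exact ⟨hw1, μ, (hpiece i w hw.2).symm.trans hTw⟩
  obtain ⟨j, hvj, hnonfix⟩ := exists_mem_closure_inter_of_iUnion_eq_univ hclosed hcover hcl
  obtain ⟨u, ⟨hu1, hufix⟩, huj⟩ := closure_nonempty_iff.mp ⟨v, hnonfix⟩
  have hji : A j ≠ A i := by
    rintro hji
    refine hufix ⟨hu1, l, hl, ?_⟩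
    rw [hpiece j u huj, hji]
    exact LinearMap.congr_fun hAi u
  refine isRationalDirection_of_intAct_eq_zero (sub_ne_zero.mpr hji)
    (norm_ne_zero_iff.mp (by simp [hv1])) ?_
  rw [intAct_sub, ← hpiece j v hvj, hTv, sub_eq_zero]
  exact (LinearMap.congr_fun hAi v).symm

/-- For a piecewise linear, integral, continuous map `T : ℝ² → ℝ²`, the endpoints
of any fixed arc of directions (i.e. any point of a non-degenerate connected
component of the set of fixed directions that lies in the closure of the
complement) are rational directions. -/
theorem endpoints_of_fixed_arcs_are_rational
    (T : E2 → E2) (hTc : Continuous T)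
    (k : ℕ) (σ : Fin k → Set E2) (A : Fin k → Matrix (Fin 2) (Fin 2) ℤ)
    (hclosed : ∀ i, IsClosed (σ i)) (hconv : ∀ i, Convex ℝ (σ i))
    (hcone : ∀ i, ∀ x ∈ σ i, ∀ r : ℝ, 0 < r → r • x ∈ σ i)
    (hcover : (⋃ i, σ i) = Set.univ)
    (hpiece : ∀ i, ∀ x ∈ σ i, T x = intAct (A i) x)
    (C : Set E2) (v : E2) (hv : v ∈ fixedDirs T)
    (hC : C = connectedComponentIn (fixedDirs T) v)
    (hbig : ¬ C.Subsingleton)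
    (hcl : v ∈ closure ({w : E2 | ‖w‖ = 1} \ fixedDirs T)) :
    ∃ t : ℝ, 0 < t ∧ ∃ m : Fin 2 → ℤ, m ≠ 0 ∧ v = t • (WithLp.toLp 2 (fun j => (m j : ℝ)) : E2) :=
  endpoints_of_fixed_arcs_are_rational_general T k σ A hclosed hcover hpiece C v hv hC hbig hcl
end

section
/- Let P = Σ_{(i,j)} c_{ij} X^i Y^j be a nonzero polynomial in two variables over ℂ with finite support, let a, b ∈ ℤ, and set ν = min{ i·a + j·b : c_{ij} ≠ 0 }. Then for all α, β ∈ ℂ with α ≠ 0 and β ≠ 0, the limit as z → 0 through nonzero complex numbers of z^{−ν} · P(α·z^a, β·z^b) exists and equals Σ_{(i,j) : c_{ij} ≠ 0, i·a + j·b = ν} c_{ij} · α^i · β^j, where z^a denotes the integer power of the nonzero complex number z. -/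
open Filter Topology

/-- For a nonzero polynomial `P = Σ c_{ij} XⁱYʲ` and integers `a, b`, with
`ν = min { ia + jb : c_{ij} ≠ 0 }`, the function `z ↦ z^{−ν} P(α zᵃ, β zᵇ)`
tends, as `z → 0` through nonzero values, to the sum of the minimal-weight
terms of `P` evaluated at `(α, β)`. -/
theorem monomial_substitution_leading_term
    (c : (ℕ × ℕ) →₀ ℂ) (hc : c ≠ 0) (a b : ℤ) (ν : ℤ)
    (hν : IsLeast {m : ℤ | ∃ p ∈ c.support, m = (p.1 : ℤ) * a + (p.2 : ℤ) * b} ν)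
    (α β : ℂ) (hα : α ≠ 0) (hβ : β ≠ 0) :
    Tendsto
      (fun z : ℂ =>
        z ^ (-ν) * ∑ p ∈ c.support, c p * (α * z ^ a) ^ p.1 * (β * z ^ b) ^ p.2)
      (𝓝[≠] (0 : ℂ))
      (𝓝 (∑ p ∈ c.support.filter (fun p => (p.1 : ℤ) * a + (p.2 : ℤ) * b = ν),
        c p * α ^ p.1 * β ^ p.2)) := by
  obtain ⟨-, hlb⟩ := hν
  have key : ∀ z : ℂ, z ≠ 0 →
      z ^ (-ν) * ∑ p ∈ c.support, c p * (α * z ^ a) ^ p.1 * (β * z ^ b) ^ p.2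
      = ∑ p ∈ c.support,
          (c p * α ^ p.1 * β ^ p.2) * z ^ ((p.1 : ℤ) * a + (p.2 : ℤ) * b - ν) := by
    intro z hz
    rw [Finset.mul_sum]
    refine Finset.sum_congr rfl fun p hp => ?_
    have he : ((p.1 : ℤ) * a + (p.2 : ℤ) * b - ν) = a * p.1 + (b * p.2 + -ν) := by ring
    rw [he, zpow_add₀ hz, zpow_add₀ hz, mul_pow, mul_pow,
      ← zpow_natCast (z ^ a), ← zpow_natCast (z ^ b), ← zpow_mul, ← zpow_mul]
    ring
  have hev : (fun z : ℂ =>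
        z ^ (-ν) * ∑ p ∈ c.support, c p * (α * z ^ a) ^ p.1 * (β * z ^ b) ^ p.2)
      =ᶠ[𝓝[≠] (0 : ℂ)]
      (fun z : ℂ => ∑ p ∈ c.support,
          (c p * α ^ p.1 * β ^ p.2) * z ^ ((p.1 : ℤ) * a + (p.2 : ℤ) * b - ν)) :=
    eventually_nhdsWithin_of_forall fun z hz => key z hz
  rw [tendsto_congr' hev, Finset.sum_filter]
  refine tendsto_finset_sum _ fun p hp => ?_
  have hge : ν ≤ (p.1 : ℤ) * a + (p.2 : ℤ) * b := hlb ⟨p, hp, rfl⟩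
  set e : ℤ := (p.1 : ℤ) * a + (p.2 : ℤ) * b - ν with hedef
  have he0 : 0 ≤ e := by omega
  have hnat : ∀ z : ℂ, z ^ e = z ^ e.toNat := by
    intro z
    rw [← zpow_natCast, Int.toNat_of_nonneg he0]
  simp only [hnat]
  have hcont : Tendsto (fun z : ℂ => (c p * α ^ p.1 * β ^ p.2) * z ^ e.toNat)
      (𝓝 (0 : ℂ)) (𝓝 ((c p * α ^ p.1 * β ^ p.2) * (0 : ℂ) ^ e.toNat)) := by
    exact (continuous_const.mul (continuous_pow _)).tendsto 0
  by_cases h : (p.1 : ℤ) * a + (p.2 : ℤ) * b = ν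
  · have : e.toNat = 0 := by omega
    simpa [h, this] using hcont.mono_left nhdsWithin_le_nhds
  · have hne : e.toNat ≠ 0 := by omega
    simpa [h, zero_pow hne] using hcont.mono_left nhdsWithin_le_nhds
end
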